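/- Define K, W : ℝ × ℝ → ℝ and f : ℝ → ℝ by K(t,q) = ((t²+1)/(t²+2))·q², W(t,q) = ((t²+12)/(3t²+27))·q⁴, and f(t) = (1/36)e^{−t²}. Then K, W satisfy conditions (C1)–(C6) (with b₁ = 1/2, b₂ = 1, μ = 4, m = 1/3), M := sup{W(t,q) : t ∈ ℝ, |q| = 1} = 4/9 < (1/2)·b̄₁ where b̄₁ := min{1, 2b₁} = 1, f is continuous, bounded, and (∫_{−∞}^{∞}|f(t)|² dt)^{1/2} < (√2/4)(b̄₁ − 2M). Consequently, there exists a twice continuously differentiable q : ℝ → ℝ with q̈(t) − ∇_qK(t,q(t)) + ∇_qW(t,q(t)) = f(t) for all t ∈ ℝ and q(t), q̇(t) → 0 as t → ±∞. -/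

import Mathlib

open MeasureTheory Filter

/-- The potential `K` of Example 1. -/
noncomputable def K₁ (t q : ℝ) : ℝ := (t ^ 2 + 1) / (t ^ 2 + 2) * q ^ 2

/-- The potential `W` of Example 1. -/
noncomputable def W₁ (t q : ℝ) : ℝ := (t ^ 2 + 12) / (3 * t ^ 2 + 27) * q ^ 4

/-- The forcing term `f` of Example 1. -/
noncomputable def f₁ (t : ℝ) : ℝ := 1 / 36 * Real.exp (-t ^ 2)

open Real Set

lemma t2pos (t : ℝ) : (0:ℝ) < t ^ 2 + 2 := by positivity
lemma t9pos (t : ℝ) : (0:ℝ) < 3 * t ^ 2 + 27 := by positivity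

lemma deriv_K (t q : ℝ) : deriv (K₁ t) q = (t ^ 2 + 1) / (t ^ 2 + 2) * (2 * q) := by
  have h : HasDerivAt (K₁ t) ((t ^ 2 + 1) / (t ^ 2 + 2) * (2 * q)) q := by
    have := ((hasDerivAt_pow 2 q).const_mul ((t ^ 2 + 1) / (t ^ 2 + 2))) ; simp at this ; exact this
  exact h.deriv

lemma deriv_W (t q : ℝ) : deriv (W₁ t) q = (t ^ 2 + 12) / (3 * t ^ 2 + 27) * (4 * q ^ 3) := by
  have h : HasDerivAt (W₁ t) ((t ^ 2 + 12) / (3 * t ^ 2 + 27) * (4 * q ^ 3)) q := by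
    have := ((hasDerivAt_pow 4 q).const_mul ((t ^ 2 + 12) / (3 * t ^ 2 + 27))) ; simp at this ; exact this
  exact h.deriv

lemma kco_ge (t : ℝ) : 1 / 2 ≤ (t ^ 2 + 1) / (t ^ 2 + 2) := by
  rw [div_le_div_iff₀ (by norm_num) (t2pos t)] ; nlinarith [sq_nonneg t]

lemma kco_le (t : ℝ) : (t ^ 2 + 1) / (t ^ 2 + 2) ≤ 1 := by
  rw [div_le_one (t2pos t)] ; nlinarith

lemma wco_eq (t : ℝ) : (t ^ 2 + 12) / (3 * t ^ 2 + 27) = 1 / 3 + 1 / (t ^ 2 + 9) := by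
  have h9 : (0:ℝ) < t ^ 2 + 9 := by positivity
  field_simp ; ring

lemma wco_pos (t : ℝ) : 0 < (t ^ 2 + 12) / (3 * t ^ 2 + 27) := by positivity

lemma wco_gt (t : ℝ) : 1 / 3 < (t ^ 2 + 12) / (3 * t ^ 2 + 27) := by
  rw [wco_eq] ; have : (0:ℝ) < 1 / (t ^ 2 + 9) := by positivity
  linarith

lemma wco_le (t : ℝ) : (t ^ 2 + 12) / (3 * t ^ 2 + 27) ≤ 4 / 9 := by
  rw [wco_eq]
  have h9 : (0:ℝ) < t ^ 2 + 9 := by positivity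
  have : 1 / (t ^ 2 + 9) ≤ 1 / 9 := by
    apply div_le_div_of_nonneg_left (by norm_num) (by norm_num) ; nlinarith
  linarith

lemma contdiff_K : ContDiff ℝ 1 (Function.uncurry K₁) := by
  apply ContDiff.mul
  · exact ContDiff.div (by fun_prop) (by fun_prop) (fun p => ne_of_gt (t2pos p.1))
  · fun_prop

lemma contdiff_W : ContDiff ℝ 1 (Function.uncurry W₁) := by
  apply ContDiff.mul
  · exact ContDiff.div (by fun_prop) (by fun_prop) (fun p => ne_of_gt (t9pos p.1))
  · fun_prop

lemma q4_of_abs (q : ℝ) (hq : |q| = 1) : q ^ 4 = 1 := by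
  have h2 : q ^ 2 = 1 := by rw [← sq_abs, hq] ; norm_num
  nlinarith

lemma W_eq_wco (t q : ℝ) (hq : |q| = 1) : W₁ t q = (t ^ 2 + 12) / (3 * t ^ 2 + 27) := by
  rw [W₁, q4_of_abs q hq, mul_one]

lemma isGLB_W : IsGLB {y : ℝ | ∃ t q : ℝ, |q| = 1 ∧ y = W₁ t q} (1 / 3) := by
  constructor
  · rintro y ⟨t, q, hq, rfl⟩
    rw [W_eq_wco t q hq] ; exact le_of_lt (wco_gt t)
  · intro b hb
    refine le_of_forall_pos_le_add (fun ε hε => ?_)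
    have hmem : (W₁ (Real.sqrt (1/ε)) 1) ∈ {y : ℝ | ∃ t q : ℝ, |q| = 1 ∧ y = W₁ t q} :=
      ⟨Real.sqrt (1/ε), 1, by norm_num, rfl⟩
    have h1 := hb hmem
    rw [W_eq_wco _ 1 (by norm_num), wco_eq] at h1
    have hs : Real.sqrt (1/ε) ^ 2 = 1/ε := Real.sq_sqrt (by positivity)
    have h9 : (0:ℝ) < Real.sqrt (1/ε) ^ 2 + 9 := by positivity
    have : 1 / (Real.sqrt (1/ε) ^ 2 + 9) ≤ ε := by
      rw [hs]
      rw [div_le_iff₀ (by positivity)]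
      have : (0:ℝ) < 1/ε := by positivity
      calc (1:ℝ) = ε * (1/ε) := by field_simp
        _ ≤ ε * (1/ε + 9) := by nlinarith
    linarith

lemma isLUB_W : IsLUB {y : ℝ | ∃ t q : ℝ, |q| = 1 ∧ y = W₁ t q} (4 / 9) := by
  constructor
  · rintro y ⟨t, q, hq, rfl⟩
    rw [W_eq_wco t q hq] ; exact wco_le t
  · intro b hb
    have hmem : (W₁ 0 1) ∈ {y : ℝ | ∃ t q : ℝ, |q| = 1 ∧ y = W₁ t q} :=
      ⟨0, 1, by norm_num, rfl⟩
    have := hb hmem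
    rw [W_eq_wco 0 1 (by norm_num)] at this
    norm_num at this ; linarith

lemma f_abs (t : ℝ) : |f₁ t| = 1 / 36 * Real.exp (-t ^ 2) := by
  rw [f₁, abs_of_nonneg] ; positivity

lemma f_bound (t : ℝ) : |f₁ t| ≤ 1 / 36 := by
  rw [f_abs]
  have : Real.exp (-t ^ 2) ≤ 1 := Real.exp_le_one_iff.mpr (by nlinarith)
  linarith

lemma f_sq (t : ℝ) : |f₁ t| ^ 2 = 1 / 1296 * Real.exp (-2 * t ^ 2) := by
  rw [f_abs, mul_pow, ← Real.exp_nat_mul]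
  norm_num

lemma integrable_fsq : Integrable (fun t : ℝ => |f₁ t| ^ 2) := by
  have : Integrable (fun t : ℝ => 1 / 1296 * Real.exp (-2 * t ^ 2)) :=
    (integrable_exp_neg_mul_sq (by norm_num : (0:ℝ) < 2)).const_mul _
  exact this.congr (Eventually.of_forall fun t => (f_sq t).symm)

lemma integral_fsq_lt : (∫ t : ℝ, |f₁ t| ^ 2) ^ ((1:ℝ)/2) <
    Real.sqrt 2 / 4 * (min 1 (2 * (1 / 2)) - 2 * (4 / 9)) := by
  have hI : (∫ t : ℝ, |f₁ t| ^ 2) = 1 / 1296 * Real.sqrt (π / 2) := by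
    rw [MeasureTheory.integral_congr_ae (Eventually.of_forall f_sq)]
    rw [MeasureTheory.integral_const_mul, integral_gaussian]
  have hpi : Real.sqrt (π / 2) < 2 := by
    rw [Real.sqrt_lt' (by norm_num : (0:ℝ) < 2)]
    nlinarith [Real.pi_lt_d2]
  have hI' : (∫ t : ℝ, |f₁ t| ^ 2) < 2 / 1296 := by
    rw [hI] ; nlinarith
  have hIpos : (0:ℝ) ≤ ∫ t : ℝ, |f₁ t| ^ 2 := by
    rw [hI] ; positivity
  have hrhs : Real.sqrt 2 / 4 * (min 1 (2 * (1 / 2)) - 2 * (4 / 9)) = Real.sqrt 2 / 36 := by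
    norm_num ; ring
  rw [hrhs, ← Real.sqrt_eq_rpow]
  have h36 : (0:ℝ) < Real.sqrt 2 / 36 := by positivity
  rw [Real.sqrt_lt' h36]
  calc (∫ t : ℝ, |f₁ t| ^ 2) < 2/1296 := hI'
    _ = (Real.sqrt 2 / 36)^2 := by
        rw [div_pow, Real.sq_sqrt (by norm_num : (0:ℝ) ≤ 2)] ; norm_num

lemma c1_lemma : ∀ L > (0:ℝ), ∃ C > (0:ℝ), ∀ t q : ℝ, |q| ≤ L →
    |deriv (K₁ t) q| ≤ C ∧ |deriv (W₁ t) q| ≤ C := by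
  intro L hL
  refine ⟨2*L + 2*L^3 + 1, by positivity, fun t q hq => ?_⟩
  have habs : (0:ℝ) ≤ |q| := abs_nonneg q
  constructor
  · rw [deriv_K, abs_mul, abs_mul]
    have h1 : |(t ^ 2 + 1) / (t ^ 2 + 2)| ≤ 1 := by
      rw [abs_of_nonneg (by positivity)] ; exact kco_le t
    have h2 : |(2:ℝ)| * |q| ≤ 2 * L := by rw [abs_two] ; nlinarith
    calc |(t ^ 2 + 1) / (t ^ 2 + 2)| * (|(2:ℝ)| * |q|) ≤ 1 * (2 * L) :=
          mul_le_mul h1 h2 (by positivity) (by norm_num)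
      _ ≤ 2*L + 2*L^3 + 1 := by nlinarith [pow_pos hL 3]
  · rw [deriv_W, abs_mul, abs_mul, abs_pow]
    have h1 : |(t ^ 2 + 12) / (3 * t ^ 2 + 27)| ≤ 4/9 := by
      rw [abs_of_nonneg (by positivity)] ; exact wco_le t
    have h2 : |q|^3 ≤ L^3 := pow_le_pow_left₀ habs hq 3
    have h3 : |(4:ℝ)| * |q|^3 ≤ 4 * L^3 := by
      rw [abs_of_nonneg (by norm_num : (0:ℝ) ≤ 4)] ; nlinarith
    calc |(t ^ 2 + 12) / (3 * t ^ 2 + 27)| * (|(4:ℝ)| * |q|^3) ≤ 4/9 * (4 * L^3) :=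
          mul_le_mul h1 h3 (by positivity) (by norm_num)
      _ ≤ 2*L + 2*L^3 + 1 := by nlinarith [pow_pos hL 3]

lemma c2_lemma (t q : ℝ) : 1 / 2 * q ^ 2 ≤ K₁ t q ∧ K₁ t q ≤ 1 * q ^ 2 := by
  have h := sq_nonneg q
  constructor
  · exact mul_le_mul_of_nonneg_right (kco_ge t) h
  · rw [one_mul] ; calc K₁ t q ≤ 1 * q^2 := mul_le_mul_of_nonneg_right (kco_le t) h
      _ = q^2 := one_mul _

lemma K_nonneg (t q : ℝ) : 0 ≤ K₁ t q := by
  unfold K₁ ; positivity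

lemma c3_lemma (t q : ℝ) : K₁ t q ≤ q * deriv (K₁ t) q ∧ q * deriv (K₁ t) q ≤ 2 * K₁ t q := by
  rw [deriv_K]
  have h : q * ((t ^ 2 + 1) / (t ^ 2 + 2) * (2 * q)) = 2 * K₁ t q := by rw [K₁] ; ring
  rw [h]
  exact ⟨by nlinarith [K_nonneg t q], le_refl _⟩

lemma c4_lemma : ∀ ε > (0:ℝ), ∃ δ > (0:ℝ), ∀ t q : ℝ, |q| ≤ δ → |deriv (W₁ t) q| ≤ ε * |q| := by
  intro ε hε
  refine ⟨3 / 4 * Real.sqrt ε, by positivity, fun t q hq => ?_⟩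
  rw [deriv_W, abs_mul, abs_mul, abs_pow]
  have h1 : |(t ^ 2 + 12) / (3 * t ^ 2 + 27)| ≤ 4/9 := by
    rw [abs_of_nonneg (by positivity)] ; exact wco_le t
  have habs : (0:ℝ) ≤ |q| := abs_nonneg q
  have hsq : |q|^2 ≤ 9/16 * ε := by
    have : (3 / 4 * Real.sqrt ε)^2 = 9/16 * ε := by
      rw [mul_pow, Real.sq_sqrt hε.le] ; norm_num
    nlinarith
  have h4 : |(4:ℝ)| = 4 := by norm_num
  rw [h4]
  calc |(t ^ 2 + 12) / (3 * t ^ 2 + 27)| * (4 * |q|^3) ≤ 4/9 * (4 * |q|^3) := by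
        nlinarith [pow_nonneg habs 3]
    _ = 16/9 * (|q|^2 * |q|) := by ring
    _ ≤ 16/9 * ((9/16 * ε) * |q|) := by nlinarith
    _ = ε * |q| := by ring

lemma W_pos (t q : ℝ) (hq : q ≠ 0) : 0 < W₁ t q := by
  rw [W₁]
  have h4 : 0 < q ^ 4 := by positivity
  exact mul_pos (wco_pos t) h4

lemma c5_lemma (t q : ℝ) (hq : q ≠ 0) : 0 < 4 * W₁ t q ∧ 4 * W₁ t q ≤ q * deriv (W₁ t) q := by
  have h := W_pos t q hq
  refine ⟨by linarith, ?_⟩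
  rw [deriv_W]
  have : q * ((t ^ 2 + 12) / (3 * t ^ 2 + 27) * (4 * q ^ 3)) = 4 * W₁ t q := by rw [W₁] ; ring
  rw [this]

noncomputable def cc : ℝ := Real.sqrt 2
lemma cc_pos : 0 < cc := Real.sqrt_pos.mpr (by norm_num)
lemma cc_sq : cc ^ 2 = 2 := Real.sq_sqrt (by norm_num)
lemma cc_ge_one : 1 ≤ cc := by
  nlinarith [cc_pos, cc_sq]

/-- `PA h t = ∫_{-∞}^t e^{c s} h s ds`. -/
noncomputable def PA (h : ℝ → ℝ) (t : ℝ) : ℝ := ∫ s in Iic t, Real.exp (cc * s) * h s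

lemma exp_cc_hasDeriv (s : ℝ) : HasDerivAt (fun u => Real.exp (cc * u) / cc) (Real.exp (cc * s)) s := by
  have h1 : HasDerivAt (fun u => cc * u) cc s := by
    simpa using (hasDerivAt_id s).const_mul cc
  have h2 : HasDerivAt (fun u => Real.exp (cc * u)) (Real.exp (cc * s) * cc) s := h1.exp
  have := h2.div_const cc
  simpa [mul_div_assoc, mul_div_cancel_right₀ _ (ne_of_gt cc_pos)] using this

lemma integrableOn_exp_cc (t : ℝ) : IntegrableOn (fun s => Real.exp (cc * s)) (Iic t) := by
  have hdom : IntegrableOn (fun s => (1 + Real.exp (cc * |t|)) * Real.exp s) (Iic t) :=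
    (integrableOn_exp_Iic t).const_mul _
  refine Integrable.mono' hdom ?_ ?_
  · exact (Real.continuous_exp.comp (continuous_const.mul continuous_id)).aestronglyMeasurable
  · refine (ae_restrict_mem measurableSet_Iic).mono (fun s hs => ?_)
    have hs' : s ≤ t := hs
    rw [Real.norm_eq_abs, abs_of_pos (Real.exp_pos _)]
    rcases le_or_gt s 0 with h0 | h0
    · have : cc * s ≤ s := by nlinarith [cc_ge_one]
      have h1 : Real.exp (cc * s) ≤ Real.exp s := Real.exp_le_exp.mpr this
      nlinarith [Real.exp_pos s, Real.exp_pos (cc * |t|)]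
    · have h1 : cc * s ≤ cc * |t| := by
        have : s ≤ |t| := le_trans hs' (le_abs_self t)
        nlinarith [cc_pos]
      have h2 : Real.exp (cc * s) ≤ Real.exp (cc * |t|) := Real.exp_le_exp.mpr h1
      have h3 : (1:ℝ) ≤ Real.exp s := Real.one_le_exp h0.le
      nlinarith [Real.exp_pos (cc * |t|), Real.exp_pos s]

lemma integral_exp_cc (t : ℝ) : ∫ s in Iic t, Real.exp (cc * s) = Real.exp (cc * t) / cc := by
  have := MeasureTheory.integral_Iic_of_hasDerivAt_of_tendsto
    (f := fun u => Real.exp (cc * u) / cc) (f' := fun s => Real.exp (cc * s)) (a := t) (m := 0)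
    ((exp_cc_hasDeriv t).continuousAt.continuousWithinAt)
    (fun x _ => exp_cc_hasDeriv x) (integrableOn_exp_cc t) ?_
  · simpa using this
  · have h1 : Tendsto (fun u : ℝ => cc * u) atBot atBot :=
      (tendsto_const_mul_atBot_of_pos cc_pos).mpr tendsto_id
    have h2 : Tendsto (fun u => Real.exp (cc * u)) atBot (nhds 0) :=
      Real.tendsto_exp_atBot.comp h1
    simpa using h2.div_const cc

section PAfacts
variable {h : ℝ → ℝ} (hcont : Continuous h)

lemma integrableOn_Fcc (hcont : Continuous h) {M : ℝ} (hM : ∀ s, |h s| ≤ M) (t : ℝ) :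
    IntegrableOn (fun s => Real.exp (cc * s) * h s) (Iic t) := by
  refine Integrable.mono' ((integrableOn_exp_cc t).const_mul M) ?_ ?_
  · exact ((Real.continuous_exp.comp (continuous_const.mul continuous_id)).mul hcont).aestronglyMeasurable
  · refine Eventually.of_forall (fun s => ?_)
    rw [Real.norm_eq_abs, abs_mul, abs_of_pos (Real.exp_pos _)]
    have := hM s
    nlinarith [Real.exp_pos (cc * s), abs_nonneg (h s)]

/-- bound on `PA` from a bound on `h` on `(-∞, t]`. -/
lemma PA_bound (hcont : Continuous h) {M m t : ℝ} (hM : ∀ s, |h s| ≤ M)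
    (hm : ∀ s ≤ t, |h s| ≤ m) : |PA h t| ≤ m * Real.exp (cc * t) / cc := by
  have hb : |PA h t| ≤ ∫ s in Iic t, m * Real.exp (cc * s) := by
    rw [PA, ← Real.norm_eq_abs]
    refine norm_integral_le_of_norm_le ((integrableOn_exp_cc t).const_mul m) ?_
    refine (ae_restrict_mem measurableSet_Iic).mono (fun s hs => ?_)
    rw [Real.norm_eq_abs, abs_mul, abs_of_pos (Real.exp_pos _)]
    have := hm s hs
    nlinarith [Real.exp_pos (cc * s), abs_nonneg (h s)]
  rw [MeasureTheory.integral_const_mul, integral_exp_cc] at hb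
  linarith [hb, mul_div_assoc m (Real.exp (cc * t)) cc]

/-- derivative of `PA`. -/
lemma PA_hasDeriv (hcont : Continuous h) {M : ℝ} (hM : ∀ s, |h s| ≤ M) (t : ℝ) :
    HasDerivAt (PA h) (Real.exp (cc * t) * h t) t := by
  have hF : Continuous (fun s => Real.exp (cc * s) * h s) :=
    (Real.continuous_exp.comp (continuous_const.mul continuous_id)).mul hcont
  have heq : PA h = fun u => PA h 0 + ∫ s in (0:ℝ)..u, Real.exp (cc * s) * h s := by
    funext u
    rw [PA, PA, ← intervalIntegral.integral_Iic_sub_Iic (integrableOn_Fcc hcont hM 0)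
      (integrableOn_Fcc hcont hM u)]
    ring
  rw [heq]
  have := intervalIntegral.integral_hasDerivAt_right
    (hF.intervalIntegrable 0 t) (hF.stronglyMeasurableAtFilter volume (nhds t)) hF.continuousAt
  simpa using this.const_add (PA h 0)

end PAfacts

lemma cont_exp_cc : Continuous (fun s : ℝ => Real.exp (cc * s)) := by fun_prop

/-- decay of `e^{-ct} PA h t` at `-∞`. -/
lemma PA_decay_atBot {h : ℝ → ℝ} (hcont : Continuous h) {M : ℝ} (hM : ∀ s, |h s| ≤ M)
    (hBot : Tendsto h atBot (nhds 0)) :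
    Tendsto (fun t => Real.exp (-(cc * t)) * PA h t) atBot (nhds 0) := by
  rw [NormedAddCommGroup.tendsto_nhds_zero]
  intro ε hε
  have hcc := cc_pos
  have hε' : 0 < cc * ε / 2 := by positivity
  obtain ⟨T, hT⟩ := eventually_atBot.mp
    ((NormedAddCommGroup.tendsto_nhds_zero.mp hBot) (cc * ε / 2) hε')
  rw [eventually_atBot]
  refine ⟨T, fun t ht => ?_⟩
  have hm : ∀ s ≤ t, |h s| ≤ cc * ε / 2 := by
    intro s hs
    have hx := (hT s (le_trans hs ht)).le
    rwa [Real.norm_eq_abs] at hx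
  have hb := PA_bound hcont hM hm
  rw [Real.norm_eq_abs, abs_mul, abs_of_pos (Real.exp_pos _)]
  have key : Real.exp (-(cc * t)) * |PA h t| ≤ Real.exp (-(cc * t)) * (cc * ε / 2 * Real.exp (cc * t) / cc) :=
    mul_le_mul_of_nonneg_left hb (Real.exp_pos _).le
  have : Real.exp (-(cc * t)) * (cc * ε / 2 * Real.exp (cc * t) / cc) = ε / 2 := by
    rw [Real.exp_neg]
    have := (Real.exp_pos (cc * t)).ne'
    field_simp
  rw [this] at key
  linarith

/-- decay of `e^{-ct} PA h t` at `+∞`. -/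
lemma PA_decay_atTop {h : ℝ → ℝ} (hcont : Continuous h) {M : ℝ} (hM : ∀ s, |h s| ≤ M)
    (hTop : Tendsto h atTop (nhds 0)) :
    Tendsto (fun t => Real.exp (-(cc * t)) * PA h t) atTop (nhds 0) := by
  rw [NormedAddCommGroup.tendsto_nhds_zero]
  intro ε hε
  have hcc := cc_pos
  have hε' : 0 < cc * ε / 4 := by positivity
  obtain ⟨T, hT⟩ := eventually_atTop.mp
    ((NormedAddCommGroup.tendsto_nhds_zero.mp hTop) (cc * ε / 4) hε')
  have hPA_T : |PA h T| ≤ M * Real.exp (cc * T) / cc :=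
    PA_bound hcont hM (fun s _ => hM s)
  have hexp0 : Tendsto (fun t => Real.exp (-(cc * t)) * (M * Real.exp (cc * T) / cc)) atTop (nhds 0) := by
    have h1 : Tendsto (fun u : ℝ => cc * u) atTop atTop :=
      (tendsto_const_mul_atTop_of_pos cc_pos).mpr tendsto_id
    have h2 : Tendsto (fun u : ℝ => Real.exp (-(cc * u))) atTop (nhds 0) := by
      apply Real.tendsto_exp_atBot.comp
      simpa using (tendsto_neg_atBot_iff.mpr h1)
    simpa using h2.mul_const (M * Real.exp (cc * T) / cc)
  have hev : ∀ᶠ t in atTop, Real.exp (-(cc * t)) * (M * Real.exp (cc * T) / cc) < ε / 2 := by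
    have := (NormedAddCommGroup.tendsto_nhds_zero.mp hexp0) (ε / 2) (by positivity)
    refine this.mono (fun t ht => ?_)
    have hle : Real.exp (-(cc * t)) * (M * Real.exp (cc * T) / cc) ≤
        ‖Real.exp (-(cc * t)) * (M * Real.exp (cc * T) / cc)‖ := le_abs_self _
    linarith [ht, hle]
  filter_upwards [hev, eventually_ge_atTop T] with t hexpt htT
  have hsplit : PA h t = PA h T + ∫ s in T..t, Real.exp (cc * s) * h s := by
    rw [PA, PA, ← intervalIntegral.integral_Iic_sub_Iic (integrableOn_Fcc hcont hM T)
      (integrableOn_Fcc hcont hM t)]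
    ring
  have hF : Continuous (fun s => Real.exp (cc * s) * h s) := cont_exp_cc.mul hcont
  have hmid : |∫ s in T..t, Real.exp (cc * s) * h s| ≤ cc * ε / 4 * (Real.exp (cc * t) / cc) := by
    have h1 : |∫ s in T..t, Real.exp (cc * s) * h s| ≤ ∫ s in T..t, |Real.exp (cc * s) * h s| :=
      intervalIntegral.abs_integral_le_integral_abs htT
    have h2 : ∫ s in T..t, |Real.exp (cc * s) * h s| ≤ ∫ s in T..t, cc * ε / 4 * Real.exp (cc * s) := by
      apply intervalIntegral.integral_mono_on htT
      · exact (hF.abs.intervalIntegrable T t)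
      · exact (continuous_const.mul cont_exp_cc).intervalIntegrable T t
      · intro s hs
        rw [abs_mul, abs_of_pos (Real.exp_pos _)]
        have hd := (hT s hs.1).le
        rw [Real.norm_eq_abs] at hd
        nlinarith [Real.exp_pos (cc * s), abs_nonneg (h s)]
    have h3 : ∫ s in T..t, cc * ε / 4 * Real.exp (cc * s)
        = cc * ε / 4 * ((Real.exp (cc * t) - Real.exp (cc * T)) / cc) := by
      rw [intervalIntegral.integral_const_mul]
      have : ∫ s in T..t, Real.exp (cc * s) = Real.exp (cc * t) / cc - Real.exp (cc * T) / cc := by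
        apply intervalIntegral.integral_eq_sub_of_hasDerivAt (fun x _ => exp_cc_hasDeriv x)
        exact cont_exp_cc.intervalIntegrable T t
      rw [this] ; ring
    have h4 : cc * ε / 4 * ((Real.exp (cc * t) - Real.exp (cc * T)) / cc)
        ≤ cc * ε / 4 * (Real.exp (cc * t) / cc) := by
      apply mul_le_mul_of_nonneg_left _ hε'.le
      exact (div_le_div_iff_of_pos_right cc_pos).mpr (by linarith [Real.exp_pos (cc * T)])
    linarith
  rw [Real.norm_eq_abs, abs_mul, abs_of_pos (Real.exp_pos _), hsplit]
  have habs : |PA h T + ∫ s in T..t, Real.exp (cc * s) * h s|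
      ≤ |PA h T| + |∫ s in T..t, Real.exp (cc * s) * h s| := abs_add_le _ _
  have hprod : Real.exp (-(cc * t)) * (cc * ε / 4 * (Real.exp (cc * t) / cc)) = ε / 4 := by
    rw [Real.exp_neg]
    have := (Real.exp_pos (cc * t)).ne'
    field_simp
  have e1 : Real.exp (-(cc * t)) * |PA h T + ∫ s in T..t, Real.exp (cc * s) * h s|
      ≤ Real.exp (-(cc * t)) * (|PA h T| + |∫ s in T..t, Real.exp (cc * s) * h s|) :=
    mul_le_mul_of_nonneg_left habs (Real.exp_pos _).le
  have e2 : Real.exp (-(cc * t)) * (|PA h T| + |∫ s in T..t, Real.exp (cc * s) * h s|)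
      ≤ Real.exp (-(cc * t)) * (M * Real.exp (cc * T) / cc) +
        Real.exp (-(cc * t)) * (cc * ε / 4 * (Real.exp (cc * t) / cc)) := by
    rw [← mul_add]
    have := mul_le_mul_of_nonneg_left (add_le_add hPA_T hmid) (Real.exp_pos (-(cc * t))).le
    linarith [this]
  rw [hprod] at e2
  linarith

/-- `PB h t = ∫_t^∞ e^{-c s} h s ds`, defined by reflection. -/
noncomputable def PB (h : ℝ → ℝ) (t : ℝ) : ℝ := PA (fun s => h (-s)) (-t)

/-- The candidate solution operator: `Sol h = G * h` with `G = e^{-c|·|}/(2c)`. -/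
noncomputable def Sol (h : ℝ → ℝ) (t : ℝ) : ℝ :=
  1 / (2 * cc) * (Real.exp (-(cc * t)) * PA h t + Real.exp (cc * t) * PB h t)

/-- Its derivative. -/
noncomputable def Sol' (h : ℝ → ℝ) (t : ℝ) : ℝ :=
  1 / 2 * (-(Real.exp (-(cc * t)) * PA h t) + Real.exp (cc * t) * PB h t)

section Solfacts
variable {h : ℝ → ℝ} {M : ℝ}

lemma hneg_cont (hcont : Continuous h) : Continuous (fun s => h (-s)) :=
  hcont.comp continuous_neg

lemma hneg_bd (hM : ∀ s, |h s| ≤ M) : ∀ s, |h (-s)| ≤ M := fun s => hM (-s)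

lemma PB_bound (hcont : Continuous h) (hM : ∀ s, |h s| ≤ M) (t : ℝ) :
    |PB h t| ≤ M * Real.exp (-(cc * t)) / cc := by
  have := PA_bound (hneg_cont hcont) (hneg_bd hM) (fun s _ => hneg_bd hM s) (t := -t)
  simpa [PB, mul_neg] using this

lemma PA_bound' (hcont : Continuous h) (hM : ∀ s, |h s| ≤ M) (t : ℝ) :
    |PA h t| ≤ M * Real.exp (cc * t) / cc :=
  PA_bound hcont hM (fun s _ => hM s)

lemma Sol_bound (hcont : Continuous h) (hM : ∀ s, |h s| ≤ M) (t : ℝ) :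
    |Sol h t| ≤ M / 2 := by
  have hcc := cc_pos
  have h2 := cc_sq
  have e1 := PA_bound' hcont hM t
  have e2 := PB_bound hcont hM t
  have hEp := Real.exp_pos (cc * t)
  have hEn := Real.exp_pos (-(cc * t))
  have hprod : Real.exp (-(cc * t)) * Real.exp (cc * t) = 1 := by
    rw [← Real.exp_add] ; simp
  rw [Sol, abs_mul, abs_of_pos (by positivity : (0:ℝ) < 1 / (2 * cc))]
  have habs : |Real.exp (-(cc * t)) * PA h t + Real.exp (cc * t) * PB h t|
      ≤ Real.exp (-(cc * t)) * |PA h t| + Real.exp (cc * t) * |PB h t| := by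
    calc _ ≤ |Real.exp (-(cc * t)) * PA h t| + |Real.exp (cc * t) * PB h t| := abs_add_le _ _
      _ = _ := by rw [abs_mul, abs_mul, abs_of_pos hEn, abs_of_pos hEp]
  have hsum : Real.exp (-(cc * t)) * |PA h t| + Real.exp (cc * t) * |PB h t|
      ≤ M / cc + M / cc := by
    have b1 : Real.exp (-(cc * t)) * |PA h t| ≤ Real.exp (-(cc * t)) * (M * Real.exp (cc * t) / cc) :=
      mul_le_mul_of_nonneg_left e1 hEn.le
    have b2 : Real.exp (cc * t) * |PB h t| ≤ Real.exp (cc * t) * (M * Real.exp (-(cc * t)) / cc) :=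
      mul_le_mul_of_nonneg_left e2 hEp.le
    have hne := (Real.exp_pos (cc * t)).ne'
    have c1 : Real.exp (-(cc * t)) * (M * Real.exp (cc * t) / cc) = M / cc := by
      rw [Real.exp_neg] ; field_simp
    have c2 : Real.exp (cc * t) * (M * Real.exp (-(cc * t)) / cc) = M / cc := by
      rw [Real.exp_neg] ; field_simp
    rw [c1] at b1 ; rw [c2] at b2 ; linarith
  calc 1 / (2 * cc) * |Real.exp (-(cc * t)) * PA h t + Real.exp (cc * t) * PB h t|
      ≤ 1 / (2 * cc) * (M / cc + M / cc) := by
        apply mul_le_mul_of_nonneg_left _ (by positivity : (0:ℝ) ≤ 1 / (2 * cc))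
        linarith
    _ = M / cc ^ 2 := by field_simp ; ring
    _ = M / 2 := by rw [h2]

lemma PB_hasDeriv (hcont : Continuous h) (hM : ∀ s, |h s| ≤ M) (t : ℝ) :
    HasDerivAt (PB h) (-(Real.exp (-(cc * t)) * h t)) t := by
  have hD := PA_hasDeriv (hneg_cont hcont) (hneg_bd hM) (-t)
  have hneg : HasDerivAt (fun u : ℝ => -u) (-1) t := by exact (hasDerivAt_id t).neg
  have := hD.comp t hneg
  simp [mul_neg] at this ; exact this

lemma Sol_hasDeriv (hcont : Continuous h) (hM : ∀ s, |h s| ≤ M) (t : ℝ) :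
    HasDerivAt (Sol h) (Sol' h t) t := by
  have hcc := cc_pos
  have hexpn : HasDerivAt (fun u : ℝ => Real.exp (-(cc * u))) (Real.exp (-(cc * t)) * (-cc)) t := by
    have hl : HasDerivAt (fun u : ℝ => -(cc * u)) (-cc) t := by
      have := ((hasDerivAt_id t).const_mul cc).neg ; simp at this ; exact this
    exact hl.exp
  have hexpp : HasDerivAt (fun u : ℝ => Real.exp (cc * u)) (Real.exp (cc * t) * cc) t := by
    have hl : HasDerivAt (fun u : ℝ => cc * u) cc t := by
      simpa using (hasDerivAt_id t).const_mul cc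
    exact hl.exp
  have hA := hexpn.mul (PA_hasDeriv hcont hM t)
  have hB := hexpp.mul (PB_hasDeriv hcont hM t)
  have hsum := (hA.add hB).const_mul (1 / (2 * cc))
  refine hsum.congr_deriv ?_
  rw [Sol']
  have hprod : Real.exp (-(cc * t)) * Real.exp (cc * t) = 1 := by
    rw [← Real.exp_add] ; simp
  field_simp
  ring

lemma Sol'_hasDeriv (hcont : Continuous h) (hM : ∀ s, |h s| ≤ M) (t : ℝ) :
    HasDerivAt (Sol' h) (2 * Sol h t - h t) t := by
  have hcc := cc_pos
  have h2 := cc_sq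
  have hexpn : HasDerivAt (fun u : ℝ => Real.exp (-(cc * u))) (Real.exp (-(cc * t)) * (-cc)) t := by
    have hl : HasDerivAt (fun u : ℝ => -(cc * u)) (-cc) t := by
      have := ((hasDerivAt_id t).const_mul cc).neg ; simp at this ; exact this
    exact hl.exp
  have hexpp : HasDerivAt (fun u : ℝ => Real.exp (cc * u)) (Real.exp (cc * t) * cc) t := by
    have hl : HasDerivAt (fun u : ℝ => cc * u) cc t := by
      simpa using (hasDerivAt_id t).const_mul cc
    exact hl.exp
  have hA := (hexpn.mul (PA_hasDeriv hcont hM t)).neg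
  have hB := hexpp.mul (PB_hasDeriv hcont hM t)
  have hsum := (hA.add hB).const_mul (1 / (2:ℝ))
  have heq : Sol' h = fun u => 1 / 2 * (-((fun v => Real.exp (-(cc * v)) * PA h v) u) +
      (fun v => Real.exp (cc * v) * PB h v) u) := by
    funext u ; rw [Sol']
  rw [heq]
  refine hsum.congr_deriv ?_
  have hprod : Real.exp (-(cc * t)) * Real.exp (cc * t) = 1 := by
    rw [← Real.exp_add] ; simp
  rw [show (2:ℝ) * Sol h t = cc ^ 2 * Sol h t by rw [h2], Sol, Real.exp_neg]
  have hne := (Real.exp_pos (cc * t)).ne'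
  field_simp
  ring

lemma PBterm_decay_atTop (hcont : Continuous h) (hM : ∀ s, |h s| ≤ M)
    (hTop : Tendsto h atTop (nhds 0)) :
    Tendsto (fun t => Real.exp (cc * t) * PB h t) atTop (nhds 0) := by
  have hneg : Tendsto (fun s : ℝ => h (-s)) atBot (nhds 0) :=
    hTop.comp tendsto_neg_atBot_atTop
  have base := PA_decay_atBot (hneg_cont hcont) (hneg_bd hM) hneg
  have comp := base.comp (tendsto_neg_atTop_atBot : Tendsto (fun t : ℝ => -t) atTop atBot)
  have : (fun t : ℝ => Real.exp (-(cc * -t)) * PA (fun s => h (-s)) (-t))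
      = fun t => Real.exp (cc * t) * PB h t := by
    funext t ; rw [PB] ; ring_nf
  rwa [← this]

lemma PBterm_decay_atBot (hcont : Continuous h) (hM : ∀ s, |h s| ≤ M)
    (hBot : Tendsto h atBot (nhds 0)) :
    Tendsto (fun t => Real.exp (cc * t) * PB h t) atBot (nhds 0) := by
  have hneg : Tendsto (fun s : ℝ => h (-s)) atTop (nhds 0) :=
    hBot.comp tendsto_neg_atTop_atBot
  have base := PA_decay_atTop (hneg_cont hcont) (hneg_bd hM) hneg
  have comp := base.comp (tendsto_neg_atBot_atTop : Tendsto (fun t : ℝ => -t) atBot atTop)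
  have : (fun t : ℝ => Real.exp (-(cc * -t)) * PA (fun s => h (-s)) (-t))
      = fun t => Real.exp (cc * t) * PB h t := by
    funext t ; rw [PB] ; ring_nf
  rwa [← this]

lemma Sol_decay_atTop (hcont : Continuous h) (hM : ∀ s, |h s| ≤ M)
    (hTop : Tendsto h atTop (nhds 0)) : Tendsto (Sol h) atTop (nhds 0) := by
  have hsum := ((PA_decay_atTop hcont hM hTop).add (PBterm_decay_atTop hcont hM hTop)).const_mul (1 / (2 * cc))
  have heq : Sol h = fun t => 1 / (2 * cc) * (Real.exp (-(cc * t)) * PA h t + Real.exp (cc * t) * PB h t) := rfl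
  rw [heq]
  convert hsum using 2 ; ring

lemma Sol_decay_atBot (hcont : Continuous h) (hM : ∀ s, |h s| ≤ M)
    (hBot : Tendsto h atBot (nhds 0)) : Tendsto (Sol h) atBot (nhds 0) := by
  have hsum := ((PA_decay_atBot hcont hM hBot).add (PBterm_decay_atBot hcont hM hBot)).const_mul (1 / (2 * cc))
  have heq : Sol h = fun t => 1 / (2 * cc) * (Real.exp (-(cc * t)) * PA h t + Real.exp (cc * t) * PB h t) := rfl
  rw [heq]
  convert hsum using 2 ; ring

lemma Sol'_decay_atTop (hcont : Continuous h) (hM : ∀ s, |h s| ≤ M)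
    (hTop : Tendsto h atTop (nhds 0)) : Tendsto (Sol' h) atTop (nhds 0) := by
  have hsum := (((PA_decay_atTop hcont hM hTop).neg).add (PBterm_decay_atTop hcont hM hTop)).const_mul (1 / (2:ℝ))
  have heq : Sol' h = fun t => 1 / 2 * (-(Real.exp (-(cc * t)) * PA h t) + Real.exp (cc * t) * PB h t) := rfl
  rw [heq]
  convert hsum using 2 ; ring

lemma Sol'_decay_atBot (hcont : Continuous h) (hM : ∀ s, |h s| ≤ M)
    (hBot : Tendsto h atBot (nhds 0)) : Tendsto (Sol' h) atBot (nhds 0) := by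
  have hsum := (((PA_decay_atBot hcont hM hBot).neg).add (PBterm_decay_atBot hcont hM hBot)).const_mul (1 / (2:ℝ))
  have heq : Sol' h = fun t => 1 / 2 * (-(Real.exp (-(cc * t)) * PA h t) + Real.exp (cc * t) * PB h t) := rfl
  rw [heq]
  convert hsum using 2 ; ring

lemma PA_sub {h h' : ℝ → ℝ} {M M' : ℝ} (hcont : Continuous h) (hM : ∀ s, |h s| ≤ M)
    (hcont' : Continuous h') (hM' : ∀ s, |h' s| ≤ M') (t : ℝ) :
    PA h t - PA h' t = PA (fun s => h s - h' s) t := by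
  rw [PA, PA, PA, ← MeasureTheory.integral_sub (integrableOn_Fcc hcont hM t) (integrableOn_Fcc hcont' hM' t)]
  congr 1 ; funext s ; ring

lemma Sol_sub {h h' : ℝ → ℝ} {M M' : ℝ} (hcont : Continuous h) (hM : ∀ s, |h s| ≤ M)
    (hcont' : Continuous h') (hM' : ∀ s, |h' s| ≤ M') (t : ℝ) :
    Sol h t - Sol h' t = Sol (fun s => h s - h' s) t := by
  have hA := PA_sub hcont hM hcont' hM' t
  have hB := PA_sub (hneg_cont hcont) (hneg_bd hM) (hneg_cont hcont') (hneg_bd hM') (-t)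
  rw [Sol, Sol, Sol, PB, PB, PB]
  rw [← hA, ← hB]
  ring

end Solfacts

open ZeroAtInfty

noncomputable def f₁' (t : ℝ) : ℝ := 1 / 36 * Real.exp (-t ^ 2)

/-- the nonlinear map `g(s, x) = (2-2k(s))x + 4w(s)x³ - f(s)` evaluated along `q`. -/
noncomputable def gmap (q : ℝ → ℝ) (s : ℝ) : ℝ :=
  2 / (s ^ 2 + 2) * q s + 4 * ((s ^ 2 + 12) / (3 * s ^ 2 + 27)) * q s ^ 3 - f₁' s

lemma f₁'_cont : Continuous f₁' := by unfold f₁' ; fun_prop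

lemma f₁'_bd (s : ℝ) : |f₁' s| ≤ 1 / 36 := by
  rw [f₁', abs_of_nonneg (by positivity)]
  have : Real.exp (-s ^ 2) ≤ 1 := Real.exp_le_one_iff.mpr (by nlinarith)
  linarith

lemma sq_tendsto_atTop : Tendsto (fun t : ℝ => t ^ 2) atTop atTop := by
  exact tendsto_pow_atTop (by norm_num)

lemma sq_tendsto_atBot : Tendsto (fun t : ℝ => t ^ 2) atBot atTop := by
  have h1 : Tendsto (fun t : ℝ => |t|) atBot atTop := tendsto_abs_atBot_atTop
  have h2 : Tendsto (fun u : ℝ => u ^ 2) atTop atTop := tendsto_pow_atTop (by norm_num)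
  have := h2.comp h1
  refine this.congr (fun t => ?_)
  simp [sq_abs]

lemma f₁'_decay {l : Filter ℝ} (hsq : Tendsto (fun t : ℝ => t ^ 2) l atTop) :
    Tendsto f₁' l (nhds 0) := by
  have h1 : Tendsto (fun t : ℝ => Real.exp (-t ^ 2)) l (nhds 0) :=
    Real.tendsto_exp_atBot.comp (by simpa using tendsto_neg_atBot_iff.mpr hsq)
  have h2 := h1.const_mul (1 / 36 : ℝ)
  simp only [mul_zero] at h2
  exact Tendsto.congr (fun t => by rw [f₁']) h2

lemma gmap_cont {q : ℝ → ℝ} (hq : Continuous q) : Continuous (gmap q) := by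
  unfold gmap f₁'
  have h1 : ∀ s : ℝ, s ^ 2 + 2 ≠ 0 := fun s => by positivity
  have h2 : ∀ s : ℝ, 3 * s ^ 2 + 27 ≠ 0 := fun s => by positivity
  fun_prop (disch := intros; first | apply h1 | apply h2)

lemma gco_bd (s : ℝ) : 0 < 2 / (s ^ 2 + 2) ∧ 2 / (s ^ 2 + 2) ≤ 1 := by
  constructor
  · positivity
  · rw [div_le_one (by positivity)] ; nlinarith [sq_nonneg s]

lemma wco_bd' (s : ℝ) : 0 < (s ^ 2 + 12) / (3 * s ^ 2 + 27) ∧ (s ^ 2 + 12) / (3 * s ^ 2 + 27) ≤ 4 / 9 := by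
  constructor
  · positivity
  · rw [div_le_div_iff₀ (by positivity) (by norm_num)] ; nlinarith [sq_nonneg s]

lemma gmap_bd {q : ℝ → ℝ} (hq : ∀ s, |q s| ≤ 1 / 10) (s : ℝ) : |gmap q s| ≤ 1 / 5 := by
  have h1 := gco_bd s
  have h2 := wco_bd' s
  have h3 := f₁'_bd s
  have hqs := hq s
  have hq3 : |q s ^ 3| ≤ 1 / 1000 := by
    rw [abs_pow]
    calc |q s| ^ 3 ≤ (1/10)^3 := pow_le_pow_left₀ (abs_nonneg _) hqs 3
      _ = 1/1000 := by norm_num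
  rw [gmap]
  have e1 : |2 / (s ^ 2 + 2) * q s| ≤ 1 / 10 := by
    rw [abs_mul, abs_of_pos h1.1]
    nlinarith [abs_nonneg (q s)]
  have e2 : |4 * ((s ^ 2 + 12) / (3 * s ^ 2 + 27)) * q s ^ 3| ≤ 16 / 9 * (1 / 1000) := by
    rw [abs_mul, abs_mul, abs_of_pos h2.1, abs_of_nonneg (by norm_num : (0:ℝ) ≤ 4)]
    nlinarith [abs_nonneg (q s ^ 3)]
  calc |2 / (s ^ 2 + 2) * q s + 4 * ((s ^ 2 + 12) / (3 * s ^ 2 + 27)) * q s ^ 3 - f₁' s|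
      ≤ |2 / (s ^ 2 + 2) * q s| + |4 * ((s ^ 2 + 12) / (3 * s ^ 2 + 27)) * q s ^ 3| + |f₁' s| := by
        have := abs_add_le (2 / (s ^ 2 + 2) * q s + 4 * ((s ^ 2 + 12) / (3 * s ^ 2 + 27)) * q s ^ 3) (-f₁' s)
        have h4 := abs_add_le (2 / (s ^ 2 + 2) * q s) (4 * ((s ^ 2 + 12) / (3 * s ^ 2 + 27)) * q s ^ 3)
        rw [abs_neg] at this
        calc _ = |2 / (s ^ 2 + 2) * q s + 4 * ((s ^ 2 + 12) / (3 * s ^ 2 + 27)) * q s ^ 3 + -f₁' s| := by ring_nf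
          _ ≤ _ := by linarith
    _ ≤ 1 / 10 + 16 / 9 * (1 / 1000) + 1 / 36 := by linarith
    _ ≤ 1 / 5 := by norm_num

lemma gmap_lip {q q' : ℝ → ℝ} (hq : ∀ s, |q s| ≤ 1 / 10) (hq' : ∀ s, |q' s| ≤ 1 / 10) (s : ℝ) :
    |gmap q s - gmap q' s| ≤ 79 / 75 * |q s - q' s| := by
  have h1 := gco_bd s
  have h2 := wco_bd' s
  have hqs := hq s ; have hqs' := hq' s
  have hdiff : gmap q s - gmap q' s =
      2 / (s ^ 2 + 2) * (q s - q' s) +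
      4 * ((s ^ 2 + 12) / (3 * s ^ 2 + 27)) * (q s ^ 3 - q' s ^ 3) := by
    rw [gmap, gmap] ; ring
  have hcube : |q s ^ 3 - q' s ^ 3| ≤ 3 / 100 * |q s - q' s| := by
    have hfac : q s ^ 3 - q' s ^ 3 = (q s - q' s) * (q s ^ 2 + q s * q' s + q' s ^ 2) := by ring
    rw [hfac, abs_mul]
    have hb : |q s ^ 2 + q s * q' s + q' s ^ 2| ≤ 3 / 100 := by
      have k1 : |q s ^ 2| ≤ 1 / 100 := by rw [abs_pow] ; nlinarith [abs_nonneg (q s)]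
      have k2 : |q' s ^ 2| ≤ 1 / 100 := by rw [abs_pow] ; nlinarith [abs_nonneg (q' s)]
      have k3 : |q s * q' s| ≤ 1 / 100 := by rw [abs_mul] ; nlinarith [abs_nonneg (q s), abs_nonneg (q' s)]
      calc |q s ^ 2 + q s * q' s + q' s ^ 2| ≤ |q s ^ 2| + |q s * q' s| + |q' s ^ 2| := abs_add_three _ _ _
        _ ≤ 3 / 100 := by linarith
    nlinarith [abs_nonneg (q s - q' s)]
  rw [hdiff]
  have e1 : |2 / (s ^ 2 + 2) * (q s - q' s)| ≤ |q s - q' s| := by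
    rw [abs_mul, abs_of_pos h1.1]
    nlinarith [abs_nonneg (q s - q' s)]
  have e2 : |4 * ((s ^ 2 + 12) / (3 * s ^ 2 + 27)) * (q s ^ 3 - q' s ^ 3)| ≤ 16 / 9 * (3 / 100 * |q s - q' s|) := by
    rw [abs_mul, abs_mul, abs_of_pos h2.1, abs_of_nonneg (by norm_num : (0:ℝ) ≤ 4)]
    nlinarith [abs_nonneg (q s ^ 3 - q' s ^ 3), abs_nonneg (q s - q' s)]
  calc _ ≤ |2 / (s ^ 2 + 2) * (q s - q' s)| + |4 * ((s ^ 2 + 12) / (3 * s ^ 2 + 27)) * (q s ^ 3 - q' s ^ 3)| := abs_add_le _ _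
    _ ≤ 79 / 75 * |q s - q' s| := by linarith

lemma gmap_decay {q : ℝ → ℝ} (hqb : ∀ s, |q s| ≤ 1 / 10) {l : Filter ℝ}
    (hsq : Tendsto (fun t : ℝ => t ^ 2) l atTop) (hq : Tendsto q l (nhds 0)) :
    Tendsto (gmap q) l (nhds 0) := by
  have h0 : Tendsto (fun s : ℝ => s ^ 2 + 2) l atTop := tendsto_atTop_add_const_right _ 2 hsq
  have hco : Tendsto (fun s : ℝ => 2 / (s ^ 2 + 2) * (1/10)) l (nhds 0) := by
    have hinv : Tendsto (fun s : ℝ => (s ^ 2 + 2)⁻¹) l (nhds 0) :=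
      tendsto_inv_atTop_zero.comp h0
    have := (hinv.const_mul (2:ℝ)).mul_const (1/10 : ℝ)
    simp only [mul_zero, zero_mul] at this
    exact this.congr (fun s => by ring)
  have t1 : Tendsto (fun s => 2 / (s ^ 2 + 2) * q s) l (nhds 0) := by
    apply squeeze_zero_norm (a := fun s => 2 / (s ^ 2 + 2) * (1/10)) _ hco
    intro s
    rw [Real.norm_eq_abs, abs_mul, abs_of_pos (gco_bd s).1]
    exact mul_le_mul_of_nonneg_left (hqb s) (gco_bd s).1.le
  have t2 : Tendsto (fun s => 4 * ((s ^ 2 + 12) / (3 * s ^ 2 + 27)) * q s ^ 3) l (nhds 0) := by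
    apply squeeze_zero_norm (a := fun s => 16 / 9 * |q s| ^ 3)
    · intro s
      rw [Real.norm_eq_abs, abs_mul, abs_mul, abs_of_pos (wco_bd' s).1,
        abs_of_nonneg (by norm_num : (0:ℝ) ≤ 4), abs_pow]
      nlinarith [(wco_bd' s).2, (wco_bd' s).1.le, pow_nonneg (abs_nonneg (q s)) 3,
        abs_nonneg (q s), pow_le_pow_left₀ (abs_nonneg (q s)) (le_refl |q s|) 3]
    · have habs : Tendsto (fun s => |q s|) l (nhds 0) := by
        have := hq.abs ; simpa using this
      have hpow : Tendsto (fun s => |q s| ^ 3) l (nhds 0) := by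
        have := (habs.mul (habs.mul habs))
        simp only [mul_zero] at this
        exact this.congr (fun s => by ring)
      have := hpow.const_mul (16/9 : ℝ)
      simpa using this
  have t3 : Tendsto f₁' l (nhds 0) := f₁'_decay hsq
  have := (t1.add t2).sub t3
  simp only [add_zero, sub_zero, zero_add, zero_sub, neg_zero] at this
  exact this.congr (fun s => by rw [gmap])

namespace Ex1

abbrev X := ZeroAtInftyContinuousMap ℝ ℝ

lemma coe_bd (q : X) (t : ℝ) : |q t| ≤ ‖q‖ := by
  have h1 : ‖q.toBCF t‖ ≤ ‖q.toBCF‖ := BoundedContinuousFunction.norm_coe_le_norm q.toBCF t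
  rwa [ZeroAtInftyContinuousMap.norm_toBCF_eq_norm, Real.norm_eq_abs] at h1

lemma coe_tendsto_top (q : X) : Tendsto (⇑q) atTop (nhds 0) := by
  have := ZeroAtInftyContinuousMapClass.zero_at_infty (F := X) q
  rw [cocompact_eq_atBot_atTop, tendsto_sup] at this
  exact this.2

lemma coe_tendsto_bot (q : X) : Tendsto (⇑q) atBot (nhds 0) := by
  have := ZeroAtInftyContinuousMapClass.zero_at_infty (F := X) q
  rw [cocompact_eq_atBot_atTop, tendsto_sup] at this
  exact this.1

/-- the ball of radius 1/10 in `C₀(ℝ, ℝ)`. -/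
def S : Set X := {q : X | ‖q‖ ≤ 1/10}

lemma S_closed : IsClosed S := isClosed_le continuous_norm continuous_const

instance : CompleteSpace S := S_closed.completeSpace_coe

instance : Nonempty S := ⟨⟨0, by simp [S]⟩⟩

section Tmap
variable (q : S)

lemma q_bd : ∀ s, |(q : X) s| ≤ 1/10 := fun s => le_trans (coe_bd q.1 s) q.2

lemma gq_cont : Continuous (gmap ⇑(q : X)) := gmap_cont (map_continuous (q : X))

lemma gq_bd : ∀ s, |gmap ⇑(q : X) s| ≤ 1/5 := gmap_bd (q_bd q)

lemma gq_top : Tendsto (gmap ⇑(q : X)) atTop (nhds 0) :=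
  gmap_decay (q_bd q) sq_tendsto_atTop (coe_tendsto_top q.1)

lemma gq_bot : Tendsto (gmap ⇑(q : X)) atBot (nhds 0) :=
  gmap_decay (q_bd q) sq_tendsto_atBot (coe_tendsto_bot q.1)

lemma Tq_cont : Continuous (Sol (gmap ⇑(q : X))) := by
  have hdiff : Differentiable ℝ (Sol (gmap ⇑(q : X))) :=
    fun t => (Sol_hasDeriv (gq_cont q) (gq_bd q) t).differentiableAt
  exact hdiff.continuous

lemma Tq_top : Tendsto (Sol (gmap ⇑(q : X))) atTop (nhds 0) :=
  Sol_decay_atTop (gq_cont q) (gq_bd q) (gq_top q)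

lemma Tq_bot : Tendsto (Sol (gmap ⇑(q : X))) atBot (nhds 0) :=
  Sol_decay_atBot (gq_cont q) (gq_bd q) (gq_bot q)

lemma Tq_bd (t : ℝ) : |Sol (gmap ⇑(q : X)) t| ≤ 1/10 := by
  have := Sol_bound (gq_cont q) (gq_bd q) t
  linarith

/-- the contraction map. -/
noncomputable def Tmap (q : S) : S :=
  ⟨⟨⟨Sol (gmap ⇑(q : X)), Tq_cont q⟩, by
      rw [cocompact_eq_atBot_atTop, tendsto_sup]
      exact ⟨Tq_bot q, Tq_top q⟩⟩, by
    show ‖_‖ ≤ (1:ℝ)/10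
    rw [← ZeroAtInftyContinuousMap.norm_toBCF_eq_norm]
    rw [BoundedContinuousFunction.norm_le (by norm_num : (0:ℝ) ≤ 1/10)]
    intro t
    rw [Real.norm_eq_abs]
    exact Tq_bd q t⟩

lemma Tmap_coe (q : S) : ⇑((Tmap q : S) : X) = Sol (gmap ⇑(q : X)) := rfl

end Tmap

lemma Tmap_contracting : ContractingWith (79/150 : NNReal) Tmap := by
  constructor
  · rw [← NNReal.coe_lt_coe]
    norm_num
  · apply LipschitzWith.of_dist_le_mul
    intro q q'
    rw [Subtype.dist_eq, Subtype.dist_eq, dist_eq_norm, dist_eq_norm]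
    rw [← ZeroAtInftyContinuousMap.norm_toBCF_eq_norm]
    rw [BoundedContinuousFunction.norm_le ?hpos]
    case hpos =>
      positivity
    intro t
    have hd : ∀ s, |(q : X) s - (q' : X) s| ≤ ‖(q : X) - (q' : X)‖ := by
      intro s
      have := coe_bd ((q : X) - (q' : X)) s
      simpa using this
    have hlip : ∀ s, |gmap ⇑(q : X) s - gmap ⇑(q' : X) s| ≤
        79/75 * ‖(q : X) - (q' : X)‖ := by
      intro s
      calc |gmap ⇑(q : X) s - gmap ⇑(q' : X) s| ≤ 79/75 * |(q : X) s - (q' : X) s| :=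
            gmap_lip (q_bd q) (q_bd q') s
        _ ≤ 79/75 * ‖(q : X) - (q' : X)‖ := by
            have := hd s ; nlinarith [abs_nonneg ((q : X) s - (q' : X) s)]
    have hsub : ∀ t', (((Tmap q : S) : X) - ((Tmap q' : S) : X)) t' =
        Sol (fun s => gmap ⇑(q : X) s - gmap ⇑(q' : X) s) t' := by
      intro t'
      have h1 : (((Tmap q : S) : X) - ((Tmap q' : S) : X)) t'
          = Sol (gmap ⇑(q : X)) t' - Sol (gmap ⇑(q' : X)) t' := by
        simp [Tmap_coe]
      rw [h1]
      exact Sol_sub (gq_cont q) (gq_bd q) (gq_cont q') (gq_bd q') t'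
    rw [Real.norm_eq_abs]
    have hcoe : (ZeroAtInftyContinuousMap.toBCF (((Tmap q : S) : X) - ((Tmap q' : S) : X))) t
        = (((Tmap q : S) : X) - ((Tmap q' : S) : X)) t := rfl
    rw [hcoe, hsub t]
    have hb := Sol_bound (h := fun s => gmap ⇑(q : X) s - gmap ⇑(q' : X) s)
      ((gq_cont q).sub (gq_cont q')) hlip t
    calc |Sol (fun s => gmap ⇑(q : X) s - gmap ⇑(q' : X) s) t|
        ≤ (79/75 * ‖(q : X) - (q' : X)‖) / 2 := hb
      _ = (79/150 : NNReal) * ‖(q : X) - (q' : X)‖ := by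
          rw [show (((79:NNReal)/150 : NNReal) : ℝ) = 79/150 by norm_num]
          ring

noncomputable def Qfix : S := ContractingWith.fixedPoint Tmap Tmap_contracting

lemma exist_sol : ∃ q : ℝ → ℝ, ContDiff ℝ 2 q ∧
    (∀ t : ℝ, deriv (deriv q) t - (t ^ 2 + 1) / (t ^ 2 + 2) * (2 * q t)
      + (t ^ 2 + 12) / (3 * t ^ 2 + 27) * (4 * q t ^ 3) = f₁' t) ∧
    Tendsto q atTop (nhds 0) ∧ Tendsto q atBot (nhds 0) ∧
    Tendsto (deriv q) atTop (nhds 0) ∧ Tendsto (deriv q) atBot (nhds 0) := by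
  have hfixS : Tmap Qfix = Qfix := ContractingWith.fixedPoint_isFixedPt Tmap_contracting
  set qq : ℝ → ℝ := ⇑((Qfix : S) : X) with hqq
  have hfun : Sol (gmap qq) = qq := by
    have h := congrArg (fun (x : S) => ⇑(x : X)) hfixS
    simpa [Tmap_coe] using h
  have hcont : Continuous (gmap qq) := gq_cont Qfix
  have hbd : ∀ s, |gmap qq s| ≤ 1/5 := gq_bd Qfix
  have htop : Tendsto (gmap qq) atTop (nhds 0) := gq_top Qfix
  have hbot : Tendsto (gmap qq) atBot (nhds 0) := gq_bot Qfix
  have hD1 : ∀ t, HasDerivAt (Sol (gmap qq)) (Sol' (gmap qq) t) t :=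
    fun t => Sol_hasDeriv hcont hbd t
  have hD2 : ∀ t, HasDerivAt (Sol' (gmap qq)) (2 * Sol (gmap qq) t - gmap qq t) t :=
    fun t => Sol'_hasDeriv hcont hbd t
  have hder : deriv (Sol (gmap qq)) = Sol' (gmap qq) := funext fun t => (hD1 t).deriv
  refine ⟨Sol (gmap qq), ?_, ?_, ?_, ?_, ?_, ?_⟩
  · rw [show (2 : WithTop ℕ∞) = 1 + 1 from rfl, contDiff_succ_iff_deriv]
    refine ⟨fun t => (hD1 t).differentiableAt, by simp, ?_⟩
    rw [hder, contDiff_one_iff_deriv]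
    refine ⟨fun t => (hD2 t).differentiableAt, ?_⟩
    have h2eq : deriv (Sol' (gmap qq)) = fun t => 2 * Sol (gmap qq) t - gmap qq t :=
      funext fun t => (hD2 t).deriv
    rw [h2eq]
    have hSold : Differentiable ℝ (Sol (gmap qq)) := fun t => (hD1 t).differentiableAt
    have hSolc : Continuous (Sol (gmap qq)) := hSold.continuous
    exact (continuous_const.mul hSolc).sub hcont
  · intro t
    rw [hder, (hD2 t).deriv]
    have hq : qq t = Sol (gmap qq) t := (congrFun hfun t).symm
    rw [gmap, hq]
    have h1 : (t:ℝ) ^ 2 + 2 ≠ 0 := by positivity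
    have h2 : 3 * (t:ℝ) ^ 2 + 27 ≠ 0 := by positivity
    field_simp
    ring
  · exact Sol_decay_atTop hcont hbd htop
  · exact Sol_decay_atBot hcont hbd hbot
  · rw [hder] ; exact Sol'_decay_atTop hcont hbd htop
  · rw [hder] ; exact Sol'_decay_atBot hcont hbd hbot

end Ex1

/-- **Example 1.** `K₁`, `W₁`, `f₁` satisfy all hypotheses of the main
theorem (with `b₁ = 1/2`, `b₂ = 1`, `μ = 4`, `m = 1/3`, `M = 4/9`, `b̄₁ = 1`), and hence
the corresponding system has a homoclinic-type solution. -/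
theorem stmt17 :
    -- C¹-smoothness
    ContDiff ℝ 1 (Function.uncurry K₁) ∧ ContDiff ℝ 1 (Function.uncurry W₁) ∧
    -- (C1)
    (∀ L > (0:ℝ), ∃ C > (0:ℝ), ∀ t q : ℝ, |q| ≤ L →
      |deriv (K₁ t) q| ≤ C ∧ |deriv (W₁ t) q| ≤ C) ∧
    -- (C2) with b₁ = 1/2, b₂ = 1
    (∀ t q : ℝ, 1 / 2 * q ^ 2 ≤ K₁ t q ∧ K₁ t q ≤ 1 * q ^ 2) ∧
    -- (C3)
    (∀ t q : ℝ, K₁ t q ≤ q * deriv (K₁ t) q ∧ q * deriv (K₁ t) q ≤ 2 * K₁ t q) ∧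
    -- (C4)
    (∀ ε > (0:ℝ), ∃ δ > (0:ℝ), ∀ t q : ℝ, |q| ≤ δ → |deriv (W₁ t) q| ≤ ε * |q|) ∧
    -- (C5) with μ = 4
    (∀ t q : ℝ, q ≠ 0 → 0 < 4 * W₁ t q ∧ 4 * W₁ t q ≤ q * deriv (W₁ t) q) ∧
    -- (C6) with m = 1/3
    IsGLB {y : ℝ | ∃ t q : ℝ, |q| = 1 ∧ y = W₁ t q} (1 / 3) ∧ (0:ℝ) < 1 / 3 ∧
    -- M = 4/9 < (1/2) b̄₁ with b̄₁ = min 1 (2 · (1/2)) = 1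
    IsLUB {y : ℝ | ∃ t q : ℝ, |q| = 1 ∧ y = W₁ t q} (4 / 9) ∧
    (4 / 9 : ℝ) < 1 / 2 * min 1 (2 * (1 / 2)) ∧
    -- properties of f
    Continuous f₁ ∧ (∃ C : ℝ, ∀ t : ℝ, |f₁ t| ≤ C) ∧
    Integrable (fun t : ℝ => |f₁ t| ^ 2) ∧
    (∫ t : ℝ, |f₁ t| ^ 2) ^ ((1:ℝ)/2) <
      Real.sqrt 2 / 4 * (min 1 (2 * (1 / 2)) - 2 * (4 / 9)) ∧
    -- consequence: existence of a homoclinic-type solution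
    ∃ q : ℝ → ℝ, ContDiff ℝ 2 q ∧
      (∀ t : ℝ, deriv (deriv q) t - deriv (K₁ t) (q t) + deriv (W₁ t) (q t) = f₁ t) ∧
      Tendsto q atTop (nhds 0) ∧ Tendsto q atBot (nhds 0) ∧
      Tendsto (deriv q) atTop (nhds 0) ∧ Tendsto (deriv q) atBot (nhds 0) := by
  refine ⟨contdiff_K, contdiff_W, c1_lemma, c2_lemma, c3_lemma, c4_lemma, c5_lemma,
    isGLB_W, by norm_num, isLUB_W, by norm_num, by unfold f₁ ; fun_prop,
    ⟨1/36, f_bound⟩, integrable_fsq, integral_fsq_lt, ?_⟩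
  obtain ⟨q, hq2, hode, ht1, ht2, ht3, ht4⟩ := Ex1.exist_sol
  refine ⟨q, hq2, fun t => ?_, ht1, ht2, ht3, ht4⟩
  rw [deriv_K, deriv_W]
  exact hode t
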